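/- Let n >= 1 be a natural number and K_n the triangle kernel. Then for every real a with 0 < a <= 2 and every t ∈ ℝ, the series Σ_{l∈ℤ} K_n(t − l·a·n) converges and equals 1/(a·n). -/

import Mathlib

open MeasureTheory Real Set
open scoped ENNReal NNReal

/-- Fourier transform with angular-frequency convention `ĝ(ω) = ∫ g(t) e^{-iωt} dt`. -/
noncomputable def FT (g : ℝ → ℂ) (ω : ℝ) : ℂ :=
  ∫ t : ℝ, g t * Complex.exp (-(Complex.I * ω * t))

/-- `f` is band-limited to `[-B, B]`: continuous, bounded, and its distributional
Fourier transform is supported in `[-B, B]`. -/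
def BandLimited (B : ℝ) (f : ℝ → ℂ) : Prop :=
  Continuous f ∧ (∃ C : ℝ, ∀ t : ℝ, ‖f t‖ ≤ C) ∧
  ∀ φ : SchwartzMap ℝ ℂ,
    (∃ U : Set ℝ, IsOpen U ∧ Set.Icc (-B) B ⊆ U ∧ ∀ ω ∈ U, FT (fun t => φ t) ω = 0) →
    (∫ t : ℝ, f t * φ t) = 0

/-- The kernel class `M(L_ε, B)`. -/
def MemKernelClass (Leps B : ℝ) (g : ℝ → ℂ) : Prop :=
  Continuous g ∧ Integrable g ∧
  (∀ ω : ℝ, (FT g ω).im = 0) ∧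
  (∀ ω : ℝ, FT g (-ω) = FT g ω) ∧
  (∀ ω : ℝ, |ω| ≤ B → FT g ω = 1) ∧
  (∀ ω : ℝ, B ≤ |ω| → |ω| ≤ Leps * B → 0 ≤ (FT g ω).re ∧ (FT g ω).re ≤ 1) ∧
  (∀ ω₁ ω₂ : ℝ, B ≤ ω₁ → ω₁ ≤ ω₂ → ω₂ ≤ Leps * B → (FT g ω₂).re ≤ (FT g ω₁).re) ∧
  (∀ ω : ℝ, Leps * B < |ω| → FT g ω = 0)

/-- `C₂(L, L_ε)` with `B = π`, valued in `[0, ∞]`. -/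
noncomputable def C2 (L Leps : ℝ) : ℝ≥0∞ :=
  ⨅ g ∈ {g : ℝ → ℂ | MemKernelClass Leps Real.pi g},
    ⨆ t : ℝ, ENNReal.ofReal (1 / L) * ∑' l : ℤ, (‖g (t - l / L)‖₊ : ℝ≥0∞)

/-- The trapezoidal kernel. -/
noncomputable def trapKernel (Leps B : ℝ) (t : ℝ) : ℝ :=
  if t = 0 then (Leps + 1) * B / (2 * Real.pi)
  else 2 * Real.sin ((Leps + 1) * B * t / 2) * Real.sin ((Leps - 1) * B * t / 2) /
    (Real.pi * (Leps - 1) * B * t ^ 2)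

/-- The triangle kernel. -/
noncomputable def triKernel (n : ℕ) (t : ℝ) : ℝ :=
  if t = 0 then 1 / (2 * n)
  else 2 * n * Real.sin (Real.pi * t / (2 * n)) ^ 2 / (Real.pi ^ 2 * t ^ 2)

/-! After the substitution `u = t / (2n)` the triangle kernel is `(2n)⁻¹ sinc(πu)²`, and the
sum becomes `(2n)⁻¹ ∑ₗ sinc(π(x + b l))²` with `b = a / 2 ≤ 1`. The function `sinc(π·)²` is the
Fourier transform of the tent `max (1 - |ξ|) 0`, so by Poisson summation this lattice sum is
`b⁻¹ ∑ₘ tent(m / b) e(m x / b)`. Since `b ≤ 1`, the tent vanishes at `m / b` for every `m ≠ 0`,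
and only the term `b⁻¹` survives. -/

open Filter
open scoped FourierTransform

def tent (ξ : ℝ) : ℝ := max (1 - |ξ|) 0

@[fun_prop]
lemma continuous_tent : Continuous tent := by
  unfold tent; fun_prop

lemma tent_eq_zero {ξ : ℝ} (h : 1 ≤ |ξ|) : tent ξ = 0 :=
  max_eq_right (by linarith)

lemma tent_eq_zero_of_notMem_Icc {ξ : ℝ} (h : ξ ∉ Icc (-1) 1) : tent ξ = 0 :=
  tent_eq_zero (not_le.1 (mt abs_le.1 h)).le

lemma integrable_tent : Integrable fun ξ => (tent ξ : ℂ) :=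
  (by fun_prop : Continuous fun ξ => (tent ξ : ℂ)).integrable_of_hasCompactSupport <|
    HasCompactSupport.intro (isCompact_Icc (a := -1) (b := 1)) fun _ h => by
      simp [tent_eq_zero_of_notMem_Icc h]

lemma integral_one_sub_mul_cos (θ : ℝ) :
    ∫ v in (0 : ℝ)..1, (1 - v) * cos (θ * v) = sinc (θ / 2) ^ 2 / 2 := by
  rcases eq_or_ne θ 0 with rfl | hθ
  · simp only [zero_mul, cos_zero, mul_one, zero_div, sinc_zero]
    rw [intervalIntegral.integral_sub intervalIntegrable_const intervalIntegral.intervalIntegrable_id]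
    norm_num
  have hderiv : ∀ v ∈ uIcc (0 : ℝ) 1, HasDerivAt
      (fun v => (1 - v) * sin (θ * v) / θ - cos (θ * v) / θ ^ 2) ((1 - v) * cos (θ * v)) v := by
    intro v _
    have hlin : HasDerivAt (fun v : ℝ => θ * v) θ v := by
      simpa using (hasDerivAt_id v).const_mul θ
    refine (((((hasDerivAt_id v).const_sub 1).mul ((hasDerivAt_sin _).comp v hlin)).div_const
      θ).sub (((hasDerivAt_cos _).comp v hlin).div_const (θ ^ 2))).congr_deriv ?_
    simp only [Function.comp_apply, id]
    field_simp
    ring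
  rw [intervalIntegral.integral_eq_sub_of_hasDerivAt hderiv
    ((by fun_prop : Continuous fun v : ℝ => (1 - v) * cos (θ * v)).intervalIntegrable _ _),
    sinc_of_ne_zero (div_ne_zero hθ two_ne_zero)]
  have hcos : cos θ = 1 - 2 * sin (θ / 2) ^ 2 := by
    rw [← cos_two_mul_eq_one_sub, mul_div_cancel₀ _ two_ne_zero]
  simp only [mul_one, mul_zero, sin_zero, cos_zero, sub_self, zero_mul, zero_div, hcos]
  field_simp
  ring

lemma fourier_tent (ξ : ℝ) : 𝓕 (fun v => (tent v : ℂ)) ξ = (sinc (π * ξ) ^ 2 : ℝ) := by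
  set g : ℝ → ℂ := fun v => Complex.exp (↑(-2 * π * v * ξ) * Complex.I) • (tent v : ℂ)
  have hg : Continuous g := by fun_prop
  have h_supp : ∫ v, g v = ∫ v in (-1 : ℝ)..1, g v := by
    rw [intervalIntegral.integral_of_le (by norm_num), ← integral_Icc_eq_integral_Ioc,
      setIntegral_eq_integral_of_forall_compl_eq_zero]
    intro v hv
    simp [g, tent_eq_zero_of_notMem_Icc hv]
  have h_fold : ∫ v in (-1 : ℝ)..1, g v = ∫ v in (0 : ℝ)..1, (g (-v) + g v) := by
    rw [intervalIntegral.integral_add (f := fun v => g (-v))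
      ((hg.comp continuous_neg).intervalIntegrable _ _)
      (hg.intervalIntegrable _ _), intervalIntegral.integral_comp_neg, neg_zero,
      intervalIntegral.integral_add_adjacent_intervals (hg.intervalIntegrable _ _)
        (hg.intervalIntegrable _ _)]
  have h_even : ∀ v ∈ uIcc (0 : ℝ) 1,
      g (-v) + g v = ((2 * ((1 - v) * cos (2 * π * ξ * v)) : ℝ) : ℂ) := by
    intro v hv
    rw [uIcc_of_le zero_le_one] at hv
    have htent : tent (-v) = 1 - v ∧ tent v = 1 - v := by
      simp only [tent, abs_neg, abs_of_nonneg hv.1]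
      exact ⟨max_eq_left (by linarith [hv.2]), max_eq_left (by linarith [hv.2])⟩
    simp only [g, htent, smul_eq_mul, ← add_mul]
    push_cast
    rw [mul_left_comm, Complex.two_cos]
    ring_nf
  rw [fourier_real_eq_integral_exp_smul, h_supp, h_fold, intervalIntegral.integral_congr h_even,
    intervalIntegral.integral_ofReal, intervalIntegral.integral_const_mul,
    integral_one_sub_mul_cos]
  congr 1
  ring_nf

lemma sinc_sq_le_inv_sq {x : ℝ} (hx : x ≠ 0) : sinc x ^ 2 ≤ (x ^ 2)⁻¹ := by
  rw [sinc_of_ne_zero hx, div_pow, div_eq_mul_inv]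
  exact mul_le_of_le_one_left (by positivity) (sin_sq_le_one x)

lemma sinc_sq_le_two_div_one_add_sq (x : ℝ) : sinc x ^ 2 ≤ 2 / (1 + x ^ 2) := by
  rcases le_or_gt (x ^ 2) 1 with hx | hx
  · calc sinc x ^ 2 ≤ 1 := by rw [← sq_abs]; exact pow_le_one₀ (abs_nonneg _) (abs_sinc_le_one x)
      _ ≤ 2 / (1 + x ^ 2) := by rw [le_div_iff₀ (by positivity)]; linarith
  · have hx0 : x ≠ 0 := by rintro rfl; norm_num at hx
    calc sinc x ^ 2 ≤ (x ^ 2)⁻¹ := sinc_sq_le_inv_sq hx0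
      _ ≤ 2 / (1 + x ^ 2) := by
        rw [inv_eq_one_div, div_le_div_iff₀ (by positivity) (by positivity)]; linarith

lemma continuous_sinc_sq_mul (c : ℝ) : Continuous fun x : ℝ => ((sinc (c * x) ^ 2 : ℝ) : ℂ) :=
  Complex.continuous_ofReal.comp ((continuous_sinc.comp (continuous_const_mul c)).pow 2)

lemma integrable_sinc_sq : Integrable fun x : ℝ => ((sinc (π * x) ^ 2 : ℝ) : ℂ) := by
  refine ((integrable_inv_one_add_sq.const_mul 2).comp_mul_left' pi_ne_zero).mono'
    (continuous_sinc_sq_mul π).aestronglyMeasurable (Eventually.of_forall fun x => ?_)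
  rw [Complex.norm_real, norm_of_nonneg (sq_nonneg _), ← div_eq_mul_inv]
  exact sinc_sq_le_two_div_one_add_sq _

lemma isBigO_sinc_sq_mul {c : ℝ} (hc : c ≠ 0) :
    (fun y : ℝ => ((sinc (c * y) ^ 2 : ℝ) : ℂ)) =O[cocompact ℝ] (|·| ^ (-2 : ℝ)) := by
  refine Asymptotics.IsBigO.of_bound (c ^ 2)⁻¹
    (Eventually.mono (cocompact_le_cofinite (eventually_cofinite_ne 0)) fun y hy => ?_)
  rw [Complex.norm_real, norm_of_nonneg (sq_nonneg _), norm_of_nonneg (by positivity),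
    rpow_neg (abs_nonneg y), rpow_two, sq_abs, ← mul_inv, ← mul_pow]
  exact sinc_sq_le_inv_sq (mul_ne_zero hc hy)

lemma fourier_sinc_sq : 𝓕 (fun x : ℝ => ((sinc (π * x) ^ 2 : ℝ) : ℂ)) = fun ξ => (tent ξ : ℂ) := by
  have hfour : 𝓕 (fun v => (tent v : ℂ)) = fun x => ((sinc (π * x) ^ 2 : ℝ) : ℂ) :=
    funext fourier_tent
  have hinv : 𝓕⁻ (fun v => (tent v : ℂ)) = fun x => ((sinc (π * x) ^ 2 : ℝ) : ℂ) :=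
    funext fun x => by rw [fourierInv_eq_fourier_neg, fourier_tent, mul_neg, sinc_neg]
  rw [← hinv]
  exact (by fun_prop : Continuous fun v => (tent v : ℂ)).fourier_fourierInv_eq integrable_tent
    (hfour ▸ integrable_sinc_sq)

theorem fourier_comp_mul_left {E : Type*} [NormedAddCommGroup E] [NormedSpace ℂ E]
    (f : ℝ → E) {c : ℝ} (hc : c ≠ 0) (ξ : ℝ) :
    𝓕 (fun x => f (c * x)) ξ = |c⁻¹| • 𝓕 f (c⁻¹ * ξ) := by
  rw [fourier_real_eq, fourier_real_eq,
    ← Measure.integral_comp_mul_left (fun v => 𝐞 (-(v * (c⁻¹ * ξ))) • f v) c]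
  congr 1 with x
  field_simp

theorem tsum_int_add_eq_fourier_zero {f : ℝ → ℂ} (hc : Continuous f) {p : ℝ} (hp : 1 < p)
    (hf : f =O[cocompact ℝ] (|·| ^ (-p))) (hFf : ∀ m : ℤ, m ≠ 0 → 𝓕 f m = 0) (x : ℝ) :
    ∑' n : ℤ, f (x + n) = 𝓕 f 0 := by
  have hsum : Summable fun m : ℤ => 𝓕 f m :=
    summable_of_ne_finset_zero (s := {0}) fun m hm => hFf m (by simpa using hm)
  rw [Real.tsum_eq_tsum_fourier_of_rpow_decay_of_summable hc hp hf hsum,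
    tsum_eq_single 0 fun m hm => by rw [hFf m hm, zero_mul]]
  simp

theorem hasSum_sinc_sq_add_mul_int {b : ℝ} (hb0 : 0 < b) (hb1 : b ≤ 1) (x : ℝ) :
    HasSum (fun l : ℤ => sinc (π * (x + b * l)) ^ 2) b⁻¹ := by
  set F : ℝ → ℂ := fun y => ((sinc (π * (b * y)) ^ 2 : ℝ) : ℂ)
  have hFF (ξ : ℝ) : 𝓕 F ξ = |b⁻¹| • (tent (b⁻¹ * ξ) : ℂ) := by
    rw [fourier_comp_mul_left (fun y => ((sinc (π * y) ^ 2 : ℝ) : ℂ)) hb0.ne', fourier_sinc_sq]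
  have hvanish (m : ℤ) (hm : m ≠ 0) : 𝓕 F m = 0 := by
    have hm1 : (1 : ℝ) ≤ |(m : ℝ)| := by exact_mod_cast Int.one_le_abs hm
    have hout : 1 ≤ |b⁻¹ * m| := by
      rw [abs_mul, abs_inv, abs_of_pos hb0, inv_mul_eq_div, le_div_iff₀ hb0]
      linarith
    rw [hFF, tent_eq_zero hout, Complex.ofReal_zero, smul_zero]
  have hdecay : F =O[cocompact ℝ] (|·| ^ (-2 : ℝ)) := by
    simpa only [F, mul_assoc] using isBigO_sinc_sq_mul (mul_ne_zero pi_ne_zero hb0.ne')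
  have hcont : Continuous F := by
    simpa only [F, mul_assoc] using continuous_sinc_sq_mul (π * b)
  have hpoisson := tsum_int_add_eq_fourier_zero hcont one_lt_two hdecay hvanish (x / b)
  have hcsum : ∑' l : ℤ, ((sinc (π * (x + b * l)) ^ 2 : ℝ) : ℂ) = (b⁻¹ : ℝ) := by
    have hterm (l : ℤ) : F (x / b + l) = ((sinc (π * (x + b * l)) ^ 2 : ℝ) : ℂ) := by
      simp only [F, mul_add, mul_div_cancel₀ x hb0.ne']
    rw [← tsum_congr hterm, hpoisson, hFF, mul_zero]
    simp [tent, abs_of_pos hb0]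
  have hsum : ∑' l : ℤ, sinc (π * (x + b * l)) ^ 2 = b⁻¹ := by
    exact_mod_cast (Complex.ofReal_tsum _).trans hcsum
  have hsummable : Summable fun l : ℤ => sinc (π * (x + b * l)) ^ 2 := by
    by_contra h
    rw [tsum_eq_zero_of_not_summable h] at hsum
    exact (inv_pos.2 hb0).ne' hsum.symm
  exact hsum ▸ hsummable.hasSum

lemma triKernel_eq_sinc_sq (n : ℕ) (u : ℝ) :
    triKernel n u = (2 * n : ℝ)⁻¹ * sinc (π * (u / (2 * n))) ^ 2 := by
  rcases eq_or_ne u 0 with rfl | hu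
  · simp [triKernel]
  rcases eq_or_ne n 0 with rfl | hn
  · simp [triKernel]
  have hn' : (n : ℝ) ≠ 0 := Nat.cast_ne_zero.2 hn
  rw [triKernel, if_neg hu, sinc_of_ne_zero (by positivity)]
  field_simp

/-- sub-sampling property of the triangle kernel (Lemma 1). -/
theorem stmt10 (n : ℕ) (hn : 1 ≤ n) (a : ℝ) (ha : 0 < a) (ha2 : a ≤ 2) (t : ℝ) :
    (Summable fun l : ℤ => triKernel n (t - (l : ℝ) * a * (n : ℝ))) ∧
    ∑' l : ℤ, triKernel n (t - (l : ℝ) * a * (n : ℝ)) = 1 / (a * (n : ℝ)) := by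
  have hn' : (n : ℝ) ≠ 0 := Nat.cast_ne_zero.2 (by omega)
  have hsinc := ((Equiv.neg ℤ).hasSum_iff.2
    (hasSum_sinc_sq_add_mul_int (b := a / 2) (by positivity) (by linarith) (t / (2 * n)))).mul_left
    (2 * n : ℝ)⁻¹
  have hterm (l : ℤ) : triKernel n (t - l * a * n)
      = (2 * n : ℝ)⁻¹ * sinc (π * (t / (2 * n) + a / 2 * ((-l : ℤ) : ℝ))) ^ 2 := by
    rw [triKernel_eq_sinc_sq]
    congr 3
    push_cast
    field_simp
    ring
  have h : HasSum (fun l : ℤ => triKernel n (t - l * a * n)) (1 / (a * n)) := by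
    rw [funext hterm, show 1 / (a * n) = (2 * n : ℝ)⁻¹ * (a / 2)⁻¹ by field_simp]
    exact hsinc
  exact ⟨h.summable, h.tsum_eq⟩
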